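/- For all $t > 0$ and $k > 0$, $\int_{\mathbb{R}} \frac{e^{-t\lambda^2}}{i\lambda + k}\, d\lambda = \int_{\mathbb{R}} \frac{k\, e^{-t\lambda^2}}{\lambda^2 + k^2}\, d\lambda = \pi\, e^{k^2 t}\, \mathrm{erfc}(k\sqrt{t})$, where $\mathrm{erfc}(x) = \frac{2}{\sqrt{\pi}} \int_x^\infty e^{-u^2}\, du$ is the complementary error function. -/

import Mathlib

/-!
Since `x ↦ e^{-tx²}/(ix + k)` takes conjugate values at `x` and `-x`, its integral is real and
equals the integral of the real part `k e^{-tx²}/(x² + k²)`. For the second identity write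
`e^{-tx²}/(x² + k²) = e^{k²t} ∫_t^∞ e^{-(x² + k²)s} ds`, swap the integrals, evaluate the Gaussian
integral in `x` to get `e^{-k²s} √(π/s)`, and substitute `u = k√s`.
-/

open Real Complex MeasureTheory

/-- The complementary error function `erfc x = (2/√π) ∫_x^∞ e^{-u²} du`. -/
noncomputable def erfc (x : ℝ) : ℝ :=
  2 / Real.sqrt π * ∫ u in Set.Ioi x, Real.exp (-u ^ 2)

open Set ComplexConjugate

theorem integral_eq_ofReal_integral_re_of_comp_neg_eq_conj {F : ℝ → ℂ} (hF : Integrable F)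
    (h : ∀ x, F (-x) = conj (F x)) : ∫ x, F x = ((∫ x, (F x).re : ℝ) : ℂ) := by
  have hreal : conj (∫ x, F x) = ∫ x, F x := by
    rw [← integral_conj, ← integral_neg_eq_self]
    simp_rw [h, conj_conj]
  rw [← conj_eq_iff_re.1 hreal]
  exact congrArg _ (integral_re hF).symm

theorem integrable_cexp_neg_mul_sq_div_I_mul_add {t k : ℝ} (ht : 0 < t) (hk : 0 < k) :
    Integrable fun x : ℝ => cexp (-t * x ^ 2) / (I * x + k) := by
  have hre (x : ℝ) : k ≤ ‖I * x + k‖ := by simpa [abs_of_pos hk] using abs_re_le_norm (I * x + k)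
  have hne (x : ℝ) : I * x + k ≠ 0 := norm_pos_iff.1 (hk.trans_le (hre x))
  refine ((integrable_exp_neg_mul_sq ht).div_const k).mono'
    (Continuous.aestronglyMeasurable (by fun_prop (disch := exact hne))) (.of_forall fun x => ?_)
  rw [norm_div, ← ofReal_pow, ← ofReal_neg, ← ofReal_mul, norm_exp_ofReal]
  gcongr
  exact hre x

theorem re_cexp_neg_mul_sq_div_I_mul_add (t k x : ℝ) :
    (cexp (-t * x ^ 2) / (I * x + k)).re = k * Real.exp (-t * x ^ 2) / (x ^ 2 + k ^ 2) := by
  rw [← ofReal_pow, ← ofReal_neg, ← ofReal_mul, ← ofReal_exp, div_eq_mul_inv, re_ofReal_mul,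
    inv_re, normSq_apply]
  simp only [neg_mul, add_re, mul_re, I_re, ofReal_re, zero_mul, I_im, ofReal_im, mul_zero,
    sub_self, zero_add, add_im, mul_im, one_mul, add_zero]
  ring

theorem integral_cexp_neg_mul_sq_div_I_mul_add {t k : ℝ} (ht : 0 < t) (hk : 0 < k) :
    ∫ x : ℝ, cexp (-t * x ^ 2) / (I * x + k) =
      ((∫ x : ℝ, k * Real.exp (-t * x ^ 2) / (x ^ 2 + k ^ 2) : ℝ) : ℂ) := by
  rw [integral_eq_ofReal_integral_re_of_comp_neg_eq_conj
    (integrable_cexp_neg_mul_sq_div_I_mul_add ht hk) fun x => by simp [map_div₀, ← exp_conj]]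
  simp_rw [re_cexp_neg_mul_sq_div_I_mul_add]

theorem integral_exp_neg_mul_Ioi {a : ℝ} (ha : 0 < a) (c : ℝ) :
    ∫ x in Ioi c, Real.exp (-a * x) = Real.exp (-a * c) / a := by
  rw [integral_exp_mul_Ioi (neg_neg_of_pos ha), neg_div_neg_eq]

theorem integrable_exp_neg_mul_sq_add_prod {t c : ℝ} (ht : 0 < t) (hc : 0 < c) :
    Integrable (fun p : ℝ × ℝ => Real.exp (-(p.1 ^ 2 + c) * p.2))
      (volume.prod (volume.restrict (Ioi t))) := by
  refine ((integrable_exp_neg_mul_sq ht).mul_prod (exp_neg_integrableOn_Ioi t hc)).mono'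
    (by fun_prop) ?_
  filter_upwards [Measure.quasiMeasurePreserving_snd.ae (ae_restrict_mem measurableSet_Ioi)]
    with p (hp : t < p.2)
  rw [norm_of_nonneg (Real.exp_pos _).le, ← Real.exp_add]
  gcongr
  nlinarith [sq_nonneg p.1]

theorem integral_exp_neg_mul_sq_add (c s : ℝ) :
    ∫ x : ℝ, Real.exp (-(x ^ 2 + c) * s) = Real.exp (-c * s) * √(π / s) := by
  have hsplit (x : ℝ) :
      Real.exp (-(x ^ 2 + c) * s) = Real.exp (-c * s) * Real.exp (-s * x ^ 2) := by
    rw [← Real.exp_add]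
    ring_nf
  simp_rw [hsplit]
  rw [integral_const_mul, integral_gaussian]

theorem integral_exp_neg_sq_Ioi_mul_sqrt {k : ℝ} (hk : 0 < k) {t : ℝ} (ht : 0 ≤ t) :
    ∫ u in Ioi (k * √t), Real.exp (-u ^ 2) =
      ∫ s in Ioi t, k / (2 * √s) * Real.exp (-k ^ 2 * s) := by
  have hmono : StrictMonoOn (fun s => k * √s) (Ici t) := fun x hx y _ hxy =>
    mul_lt_mul_of_pos_left (Real.sqrt_lt_sqrt (ht.trans hx) hxy) hk
  rw [← (by fun_prop : Continuous fun s => k * √s).continuousOn.image_Ioi_of_strictMonoOn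
      hmono (tendsto_sqrt_atTop.const_mul_atTop hk),
    integral_image_eq_integral_abs_deriv_smul measurableSet_Ioi
      (fun s hs => ((Real.hasDerivAt_sqrt (ht.trans_lt hs).ne').const_mul k).hasDerivWithinAt)
      (hmono.injOn.mono Ioi_subset_Ici_self)]
  refine setIntegral_congr_fun measurableSet_Ioi fun s (hs : t < s) => ?_
  have hs0 : 0 < s := ht.trans_lt hs
  simp only [smul_eq_mul, mul_pow, Real.sq_sqrt hs0.le]
  rw [abs_of_pos (by positivity)]
  ring_nf

theorem integral_mul_exp_neg_mul_sq_div_sq_add_sq {t k : ℝ} (ht : 0 < t) (hk : 0 < k) :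
    ∫ x : ℝ, k * Real.exp (-t * x ^ 2) / (x ^ 2 + k ^ 2) =
      π * Real.exp (k ^ 2 * t) * erfc (k * √t) := by
  have hlaplace (x : ℝ) : k * Real.exp (-t * x ^ 2) / (x ^ 2 + k ^ 2) =
      k * Real.exp (k ^ 2 * t) * ∫ s in Ioi t, Real.exp (-(x ^ 2 + k ^ 2) * s) := by
    rw [integral_exp_neg_mul_Ioi (by positivity), mul_div_assoc', mul_assoc, ← Real.exp_add]
    ring_nf
  have hsqrt (s : ℝ) : Real.exp (-k ^ 2 * s) * √(π / s) =
      2 * √π / k * (k / (2 * √s) * Real.exp (-k ^ 2 * s)) := by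
    rw [Real.sqrt_div pi_nonneg]
    field_simp
  simp_rw [hlaplace]
  rw [integral_const_mul,
    integral_integral_swap (integrable_exp_neg_mul_sq_add_prod ht (by positivity))]
  simp_rw [integral_exp_neg_mul_sq_add, hsqrt]
  rw [integral_const_mul, ← integral_exp_neg_sq_Ioi_mul_sqrt hk ht.le, erfc]
  field_simp
  rw [Real.sq_sqrt pi_nonneg]
  ring

theorem stmt4 (t k : ℝ) (ht : 0 < t) (hk : 0 < k) :
    (∫ lam : ℝ, Complex.exp (-(t : ℂ) * (lam : ℂ) ^ 2) / (Complex.I * lam + k)) =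
      ((∫ lam : ℝ, k * Real.exp (-t * lam ^ 2) / (lam ^ 2 + k ^ 2) : ℝ) : ℂ) ∧
    (∫ lam : ℝ, k * Real.exp (-t * lam ^ 2) / (lam ^ 2 + k ^ 2)) =
      π * Real.exp (k ^ 2 * t) * erfc (k * Real.sqrt t) :=
  ⟨integral_cexp_neg_mul_sq_div_I_mul_add ht hk, integral_mul_exp_neg_mul_sq_div_sq_add_sq ht hk⟩
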